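/- arXiv:1709.07268 — 5 statements merged into one kernel-verified Lean document; each statement's English description precedes it below -/
import Mathlib

section
/- For density matrices ρ₁,…,ρ_N on a finite-dimensional Hilbert space and a probability distribution (p₁,…,p_N), the von Neumann entropy satisfies H(∑ᵢ pᵢ ρᵢ) ≤ ∑ᵢ pᵢ H(ρᵢ) + log N. -/
noncomputable section
open scoped BigOperators ComplexOrder

variable {n : Type*} [Fintype n] [DecidableEq n]

/-- A density matrix: positive semidefinite with trace one. -/
def IsDensity (ρ : Matrix n n ℂ) : Prop := ρ.PosSemidef ∧ ρ.trace = 1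

/-- Apply a real function to a Hermitian matrix via the functional calculus
(junk value `0` if the matrix is not Hermitian). -/
noncomputable def matFun (A : Matrix n n ℂ) (f : ℝ → ℝ) : Matrix n n ℂ :=
  if h : A.IsHermitian then h.cfc f else 0

/-- Von Neumann entropy `H(ρ) = -tr[ρ log ρ]`. -/
noncomputable def vN (ρ : Matrix n n ℂ) : ℝ := (-(ρ * matFun ρ Real.log).trace).re

/-!
Write `p i • ρ i = Bᵢ Bᵢᴴ` with `Bᵢᴴ Bᵢ` diagonal, carrying the weights `p i λᵢⱼ`, where `λᵢⱼ` are
the eigenvalues of `ρ i`. Placing the columns of all `Bᵢ` side by side gives one matrix `M` with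
`∑ p i • ρ i = M Mᴴ`. The entropy of `M Mᴴ` is at most the Shannon entropy of the diagonal of the
Gram matrix `Mᴴ M`: after diagonalising `M Mᴴ`, the diagonal of `Mᴴ M` is obtained from its
eigenvalues by a doubly substochastic matrix, and concavity of `x ↦ -x log x` applies. That
Shannon entropy is `H(p) + ∑ p i H(ρ i)`, and `H(p) ≤ log N`.
-/

open Real Matrix

theorem ConcaveOn.sum_mul_le_map_sum_of_sum_le_one {ι : Type*} [Fintype ι] {f : ℝ → ℝ}
    (hf : ConcaveOn ℝ (Set.Ici 0) f) (hf0 : 0 ≤ f 0) {w x : ι → ℝ} (hw : ∀ i, 0 ≤ w i)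
    (hw1 : ∑ i, w i ≤ 1) (hx : ∀ i, 0 ≤ x i) :
    ∑ i, w i * f (x i) ≤ f (∑ i, w i * x i) := by
  -- pad the weights with the point `0`, carrying the missing mass `1 - ∑ w`
  have := hf.le_map_sum (t := .univ) (w := fun o : Option ι => o.elim (1 - ∑ i, w i) w)
    (p := fun o => o.elim 0 x) (by rintro (_ | i) _ <;> simp [hw, hw1])
    (by simp [Fintype.sum_option]) (by rintro (_ | i) _ <;> simp [hx])
  simp only [Fintype.sum_option, Option.elim, smul_eq_mul, mul_zero, zero_add] at this
  nlinarith [mul_nonneg (sub_nonneg.2 hw1) hf0]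

theorem Real.sum_negMulLog_le_log_card {ι : Type*} [Fintype ι] {p : ι → ℝ}
    (hp : ∀ i, 0 ≤ p i) (hp1 : ∑ i, p i = 1) :
    ∑ i, negMulLog (p i) ≤ log (Fintype.card ι) := by
  have : Nonempty ι :=
    Finset.univ_nonempty_iff.1 (Finset.nonempty_of_sum_ne_zero (hp1 ▸ one_ne_zero))
  have hN : (0 : ℝ) < Fintype.card ι := mod_cast Fintype.card_pos
  have := concaveOn_negMulLog.le_map_sum (t := .univ) (w := fun _ => (Fintype.card ι : ℝ)⁻¹)
    (p := p) (by simp [hN.le]) (by simp [hN.ne']) (fun i _ => hp i)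
  simp only [smul_eq_mul, ← Finset.mul_sum, hp1, mul_one] at this
  rw [negMulLog, neg_mul, log_inv, mul_neg, neg_neg] at this
  exact le_of_mul_le_mul_left this (inv_pos.2 hN)

section
variable {𝕜 : Type*} [RCLike 𝕜] {κ m : Type*} [Fintype κ]

theorem Matrix.re_conjTranspose_mul_self_apply_self (C : Matrix κ m 𝕜) (j : m) :
    RCLike.re ((Cᴴ * C) j j) = ∑ k, ‖C k j‖ ^ 2 := by
  simp only [Matrix.mul_apply, conjTranspose_apply, RCLike.star_def, RCLike.conj_mul, map_sum]
  norm_cast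

theorem Matrix.IsHermitian.re_apply_self_le_one [Fintype m] {P : Matrix m m 𝕜}
    (hP : P.IsHermitian) (hP2 : IsIdempotentElem P) (j : m) : RCLike.re (P j j) ≤ 1 := by
  have h : RCLike.re (P j j) = ∑ l, ‖P l j‖ ^ 2 := by
    rw [← re_conjTranspose_mul_self_apply_self, hP.eq, hP2.eq]
  have : RCLike.re (P j j) ^ 2 ≤ RCLike.re (P j j) := calc
    _ ≤ ‖P j j‖ ^ 2 := by gcongr; exacts [h ▸ by positivity, RCLike.re_le_norm (P j j)]
    _ ≤ _ := h ▸ Finset.single_le_sum (f := fun l => ‖P l j‖ ^ 2) (fun _ _ => by positivity)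
      (Finset.mem_univ j)
  nlinarith

theorem Matrix.sum_negMulLog_le_of_mul_conjTranspose_eq_diagonal [Fintype m] [DecidableEq κ]
    {C : Matrix κ m 𝕜} {μ : κ → ℝ} (h : C * Cᴴ = diagonal fun k => (μ k : 𝕜)) :
    ∑ k, negMulLog (μ k) ≤ ∑ j, negMulLog (RCLike.re ((Cᴴ * C) j j)) := by
  have hμ (k : κ) : μ k = ∑ j, ‖C k j‖ ^ 2 := by
    simpa [h, norm_star] using re_conjTranspose_mul_self_apply_self Cᴴ k
  have hμ0 (k : κ) : 0 ≤ μ k := hμ k ▸ by positivity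
  -- `∑ₖ ‖C k j‖² / μ k` is the `j`-th diagonal entry of the orthogonal projection
  -- `Cᴴ D⁻¹ C`, hence at most `1`
  have hcol (j : m) : ∑ k, ‖C k j‖ ^ 2 / μ k ≤ 1 := by
    set P := Cᴴ * diagonal (fun k => (μ k : 𝕜)⁻¹) * C
    have hP : P.IsHermitian := by
      simp [P, IsHermitian, conjTranspose_mul, Matrix.mul_assoc, diagonal_conjTranspose,
        Pi.star_def]
    have hP2 : IsIdempotentElem P := by
      simp only [IsIdempotentElem, P, Matrix.mul_assoc]
      rw [← Matrix.mul_assoc C, h, ← Matrix.mul_assoc (diagonal _), diagonal_mul_diagonal,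
        ← Matrix.mul_assoc (diagonal _), diagonal_mul_diagonal]
      congr 3 with k
      simpa using mul_inv_mul_cancel (μ k : 𝕜)⁻¹
    calc ∑ k, ‖C k j‖ ^ 2 / μ k = RCLike.re (P j j) := by
          simp only [P, mul_apply (M := _ * _), mul_diagonal, conjTranspose_apply, map_sum]
          refine Finset.sum_congr rfl fun k _ => ?_
          rw [mul_right_comm, RCLike.star_def, RCLike.conj_mul, ← RCLike.ofReal_pow,
            ← RCLike.ofReal_inv, ← RCLike.ofReal_mul, RCLike.ofReal_re, div_eq_mul_inv]
      _ ≤ 1 := hP.re_apply_self_le_one hP2 j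
  have hrow (k : κ) : (∑ j, ‖C k j‖ ^ 2 / μ k) * negMulLog (μ k) = negMulLog (μ k) := by
    rcases eq_or_ne (μ k) 0 with h0 | h0
    · rw [h0, negMulLog_zero, mul_zero]
    · rw [← Finset.sum_div, ← hμ, div_self h0, one_mul]
  have hmass (j : m) (k : κ) : ‖C k j‖ ^ 2 / μ k * μ k = ‖C k j‖ ^ 2 :=
    div_mul_cancel_of_imp fun h0 => by
      rw [hμ, Finset.sum_eq_zero_iff_of_nonneg fun _ _ => by positivity] at h0
      exact h0 j (Finset.mem_univ j)
  calc ∑ k, negMulLog (μ k)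
      = ∑ j, ∑ k, ‖C k j‖ ^ 2 / μ k * negMulLog (μ k) := by
        rw [Finset.sum_comm]
        exact Finset.sum_congr rfl fun k _ => by rw [← Finset.sum_mul, hrow]
    _ ≤ ∑ j, negMulLog (∑ k, ‖C k j‖ ^ 2 / μ k * μ k) := by
        gcongr with j
        exact concaveOn_negMulLog.sum_mul_le_map_sum_of_sum_le_one negMulLog_zero.ge
          (fun k => div_nonneg (by positivity) (hμ0 k)) (hcol j) hμ0
    _ = ∑ j, negMulLog (RCLike.re ((Cᴴ * C) j j)) := by
        simp_rw [hmass, re_conjTranspose_mul_self_apply_self]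

theorem Matrix.IsHermitian.sum_negMulLog_eigenvalues_le [Fintype m] [DecidableEq κ]
    {A : Matrix κ κ 𝕜} (hA : A.IsHermitian) {C : Matrix κ m 𝕜} (h : A = C * Cᴴ) :
    ∑ k, negMulLog (hA.eigenvalues k) ≤ ∑ j, negMulLog (RCLike.re ((Cᴴ * C) j j)) := by
  have hdiag := hA.conjStarAlgAut_star_eigenvectorUnitary
  rw [Unitary.conjStarAlgAut_star_apply] at hdiag
  have hU := Unitary.mul_star_self_of_mem hA.eigenvectorUnitary.2
  generalize (hA.eigenvectorUnitary : Matrix κ κ 𝕜) = U at hU hdiag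
  have hgram : (star U * C)ᴴ * (star U * C) = Cᴴ * C := by
    rw [conjTranspose_mul, ← star_eq_conjTranspose, star_star, Matrix.mul_assoc,
      ← Matrix.mul_assoc U, hU, Matrix.one_mul]
  rw [← hgram]
  refine sum_negMulLog_le_of_mul_conjTranspose_eq_diagonal (hdiag ▸ ?_)
  rw [conjTranspose_mul, ← star_eq_conjTranspose, star_star, h]
  simp only [Matrix.mul_assoc]

theorem Matrix.PosSemidef.exists_smul_eq_mul_conjTranspose [Fintype m] [DecidableEq m]
    {A : Matrix m m 𝕜} (hA : A.PosSemidef) {c : ℝ} (hc : 0 ≤ c) :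
    ∃ B : Matrix m m 𝕜, (c : 𝕜) • A = B * Bᴴ ∧
      Bᴴ * B = diagonal fun j => ((c * hA.isHermitian.eigenvalues j : ℝ) : 𝕜) := by
  have hspec := hA.isHermitian.spectral_theorem
  rw [Unitary.conjStarAlgAut_apply] at hspec
  have hU := Unitary.star_mul_self_of_mem hA.isHermitian.eigenvectorUnitary.2
  have hev := hA.eigenvalues_nonneg
  generalize (hA.isHermitian.eigenvectorUnitary : Matrix m m 𝕜) = U at hU hspec
  generalize hA.isHermitian.eigenvalues = ev at hev hspec ⊢
  set D : Matrix m m 𝕜 := diagonal fun j => (√(c * ev j) : 𝕜)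
  have hDself : Dᴴ = D := by simp [D, diagonal_conjTranspose, Pi.star_def]
  have hD : Dᴴ * D = diagonal fun j => ((c * ev j : ℝ) : 𝕜) := by
    rw [hDself, diagonal_mul_diagonal]
    congr! 2 with j
    rw [← RCLike.ofReal_mul, Real.mul_self_sqrt (mul_nonneg hc (hev j))]
  refine ⟨U * D, ?_, ?_⟩
  · calc (c : 𝕜) • A = U * diagonal (fun j => ((c * ev j : ℝ) : 𝕜)) * star U := by
          rw [hspec, ← Matrix.smul_mul, ← Matrix.mul_smul, ← diagonal_smul]
          congr 2
          ext i j
          simp [diagonal_apply, Algebra.smul_def]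
      _ = U * D * (U * D)ᴴ := by
          rw [← hD, hDself, conjTranspose_mul, hDself, star_eq_conjTranspose]
          simp only [Matrix.mul_assoc]
  · rw [conjTranspose_mul, Matrix.mul_assoc, ← Matrix.mul_assoc Uᴴ,
      ← star_eq_conjTranspose U, hU, Matrix.one_mul, hD]
end

section
variable {α ι κ m : Type*} [NonUnitalNonAssocSemiring α] [StarRing α]

def Matrix.fromColBlocks (B : ι → Matrix κ m α) : Matrix κ (ι × m) α :=
  of fun k x => B x.1 k x.2

theorem Matrix.fromColBlocks_mul_conjTranspose [Fintype ι] [Fintype m]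
    (B : ι → Matrix κ m α) :
    fromColBlocks B * (fromColBlocks B)ᴴ = ∑ i, B i * (B i)ᴴ := by
  ext k l
  simp [fromColBlocks, mul_apply, Matrix.sum_apply, Fintype.sum_prod_type]

theorem Matrix.conjTranspose_fromColBlocks_mul_apply [Fintype κ] (B : ι → Matrix κ m α)
    (x y : ι × m) :
    ((fromColBlocks B)ᴴ * fromColBlocks B) x y = ((B x.1)ᴴ * B y.1) x.2 y.2 := by
  simp [fromColBlocks, mul_apply]
end

theorem Matrix.IsHermitian.trace_cfc {𝕜 m : Type*} [RCLike 𝕜] [Fintype m] [DecidableEq m]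
    {A : Matrix m m 𝕜} (hA : A.IsHermitian) (f : ℝ → ℝ) :
    (hA.cfc f).trace = ∑ k, (f (hA.eigenvalues k) : 𝕜) := by
  rw [IsHermitian.cfc, Unitary.conjStarAlgAut_apply, trace_mul_cycle, Unitary.coe_star_mul_self,
    Matrix.one_mul, trace_diagonal]
  rfl

theorem vN_eq_sum_negMulLog_eigenvalues {m : Type*} [Fintype m] [DecidableEq m]
    {A : Matrix m m ℂ} (hA : A.IsHermitian) : vN A = ∑ k, negMulLog (hA.eigenvalues k) := by
  have hmul : A * hA.cfc log = hA.cfc fun x => x * log x := by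
    rw [← hA.cfc_eq, ← hA.cfc_eq,
      cfc_mul (fun x => x) log A (hg := A.finite_real_spectrum.continuousOn _), cfc_id' ℝ A]
  rw [vN, matFun, dif_pos hA, hmul, hA.trace_cfc]
  simp [negMulLog]

theorem IsDensity.sum_negMulLog_mul_eigenvalues {m : Type*} [Fintype m] [DecidableEq m]
    {ρ : Matrix m m ℂ} (hρ : IsDensity ρ) (c : ℝ) :
    ∑ j, negMulLog (c * hρ.1.isHermitian.eigenvalues j) = negMulLog c + c * vN ρ := by
  have htr : ∑ j, hρ.1.isHermitian.eigenvalues j = 1 := by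
    simpa [hρ.1.isHermitian.trace_eq_sum_eigenvalues] using congrArg Complex.re hρ.2
  simp_rw [negMulLog_mul, Finset.sum_add_distrib, ← Finset.sum_mul, ← Finset.mul_sum, htr,
    vN_eq_sum_negMulLog_eigenvalues hρ.1.isHermitian, one_mul]

theorem entropy_mixture_le_avg_add_log_card
    {d N : ℕ} (ρ : Fin N → Matrix (Fin d) (Fin d) ℂ) (p : Fin N → ℝ)
    (hρ : ∀ i, IsDensity (ρ i)) (hp : ∀ i, 0 ≤ p i) (hp1 : ∑ i, p i = 1) :
    vN (∑ i, (p i : ℂ) • ρ i) ≤ ∑ i, p i * vN (ρ i) + Real.log N := by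
  choose B hB hBB using fun i => (hρ i).1.exists_smul_eq_mul_conjTranspose (hp i)
  have hmix : ∑ i, (p i : ℂ) • ρ i = fromColBlocks B * (fromColBlocks B)ᴴ := by
    rw [fromColBlocks_mul_conjTranspose]
    exact Finset.sum_congr rfl fun i _ => hB i
  have hH : (∑ i, (p i : ℂ) • ρ i).IsHermitian :=
    hmix ▸ isHermitian_mul_conjTranspose_self _
  calc vN (∑ i, (p i : ℂ) • ρ i) = ∑ k, negMulLog (hH.eigenvalues k) :=
        vN_eq_sum_negMulLog_eigenvalues hH
    _ ≤ ∑ x : Fin N × Fin d, negMulLog (p x.1 * (hρ x.1).1.isHermitian.eigenvalues x.2) := by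
        refine (hH.sum_negMulLog_eigenvalues_le hmix).trans_eq ?_
        simp [conjTranspose_fromColBlocks_mul_apply, hBB]
    _ = ∑ i, (negMulLog (p i) + p i * vN (ρ i)) := by
        rw [Fintype.sum_prod_type]
        exact Finset.sum_congr rfl fun i _ => (hρ i).sum_negMulLog_mul_eigenvalues (p i)
    _ ≤ ∑ i, p i * vN (ρ i) + log N := by
        have := sum_negMulLog_le_log_card hp hp1
        rw [Fintype.card_fin] at this
        rw [Finset.sum_add_distrib]
        linarith
end
end

section
/- For density matrices ρ₁,…,ρ_N and a probability distribution (p₁,…,p_N), the von Neumann entropy of the mixture is bounded by H(∑ᵢ pᵢ ρᵢ) ≤ ∑ᵢ pᵢ H(ρᵢ) + H(p), where H(p) = -∑ᵢ pᵢ log pᵢ is the Shannon entropy of the distribution. -/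
/-
Put `ρ̄ = ∑ pᵢ ρᵢ`. Each `pᵢ ρᵢ ≤ ρ̄` in the Loewner order, and `log` is operator monotone, so
`tr (pᵢ ρᵢ log (pᵢ ρᵢ)) ≤ tr (pᵢ ρᵢ log ρ̄)`; summing over `i` gives `H(ρ̄) ≤ ∑ H(pᵢ ρᵢ)`, and
`H(pᵢ ρᵢ) = pᵢ H(ρᵢ) - pᵢ log pᵢ`. Since `pᵢ ρᵢ` and `ρ̄` may be singular, monotonicity is
applied to `log (· + δ)` and `δ → 0` is taken in an eigenbasis of `ρ̄`: there the diagonal of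
`pᵢ ρᵢ` is dominated by the eigenvalues of `ρ̄`, so it vanishes on the kernel of `ρ̄`, where
`log (· + δ)` diverges.
-/

noncomputable section
open scoped BigOperators ComplexOrder

variable {n : Type*} [Fintype n] [DecidableEq n]

open scoped MatrixOrder Matrix.Norms.L2Operator
open Filter Topology

lemma cfc_log_add_const_le_of_le {A : Type*} [CStarAlgebra A] [PartialOrder A] [StarOrderedRing A]
    {a b : A} (ha : 0 ≤ a) (hab : a ≤ b) {δ : ℝ} (hδ : 0 < δ) :
    cfc (fun x => Real.log (x + δ)) a ≤ cfc (fun x => Real.log (x + δ)) b := by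
  have hlog (c : A) (hc : 0 ≤ c) :
      cfc (fun x => Real.log (x + δ)) c = CFC.log (c + algebraMap ℝ A δ) := by
    rw [cfc_comp' Real.log (· + δ) c ?_, cfc_add_const δ (fun x => x) c, cfc_id' ℝ c]
    · rfl
    · refine Real.continuousOn_log.mono ?_
      rintro _ ⟨x, hx, rfl⟩
      have hx0 := spectrum_nonneg_of_nonneg hc hx
      simp only [Set.mem_compl_iff, Set.mem_singleton_iff]
      linarith
  rw [hlog a ha, hlog b (ha.trans hab)]
  have hpos : IsStrictlyPositive (a + algebraMap ℝ A δ) := by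
    rw [add_comm]; exact (isStrictlyPositive_algebraMap hδ).add_nonneg ha
  exact CFC.log_le_log (by gcongr) hpos

lemma tendsto_mul_log_add_nhdsGT {c x : ℝ} (hx : 0 ≤ x) (hc : x = 0 → c = 0) :
    Tendsto (fun δ => c * Real.log (x + δ)) (𝓝[>] 0) (𝓝 (c * Real.log x)) := by
  rcases hx.eq_or_lt with rfl | hx
  · simp [hc rfl]
  · refine tendsto_nhdsWithin_of_tendsto_nhds ?_
    have : ContinuousAt (fun δ => c * Real.log (x + δ)) 0 :=
      continuousAt_const.mul ((Real.continuousAt_log (by simpa using hx.ne')).comp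
        (continuousAt_const.add continuousAt_id))
    simpa using this.tendsto

lemma sum_mul_log_le_of_forall_add {ι κ : Type*} [Fintype ι] [Fintype κ]
    {a : ι → ℝ} {w μ : κ → ℝ} (ha : ∀ j, 0 ≤ a j) (hw : ∀ k, 0 ≤ w k) (hwμ : ∀ k, w k ≤ μ k)
    (h : ∀ δ > 0, ∑ j, a j * Real.log (a j + δ) ≤ ∑ k, w k * Real.log (μ k + δ)) :
    ∑ j, a j * Real.log (a j) ≤ ∑ k, w k * Real.log (μ k) := by
  refine le_of_tendsto_of_tendsto
    (tendsto_finsetSum _ fun j _ => tendsto_mul_log_add_nhdsGT (ha j) id)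
    (tendsto_finsetSum _ fun k _ => tendsto_mul_log_add_nhdsGT ((hw k).trans (hwμ k))
      fun hμ => le_antisymm (hμ ▸ hwμ k) (hw k)) ?_
  filter_upwards [self_mem_nhdsWithin] with δ hδ using h δ hδ

namespace Matrix

lemma PosSemidef.trace_mul_nonneg {A X : Matrix n n ℂ} (hA : A.PosSemidef) (hX : X.PosSemidef) :
    0 ≤ (A * X).trace := by
  obtain ⟨Y, rfl⟩ := CStarAlgebra.nonneg_iff_eq_star_mul_self.mp hX.nonneg
  rw [← Matrix.mul_assoc, trace_mul_cycle, star_eq_conjTranspose]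
  exact (hA.mul_mul_conjTranspose_same Y).trace_nonneg

namespace IsHermitian

variable {B : Matrix n n ℂ} (hB : B.IsHermitian)

def diagInEigenbasis (A : Matrix n n ℂ) (k : n) : ℝ :=
  ((star (hB.eigenvectorUnitary : Matrix n n ℂ) * A * hB.eigenvectorUnitary) k k).re

lemma re_trace_mul_cfc (A : Matrix n n ℂ) (f : ℝ → ℝ) :
    (A * cfc f B).trace.re = ∑ k, hB.diagInEigenbasis A k * f (hB.eigenvalues k) := by
  rw [hB.cfc_eq, IsHermitian.cfc, Unitary.conjStarAlgAut_apply, ← Matrix.mul_assoc,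
    ← Matrix.mul_assoc, trace_mul_cycle, ← Matrix.mul_assoc, trace, Complex.re_sum]
  simp [diagInEigenbasis, mul_diagonal]

lemma diagInEigenbasis_self (k : n) : hB.diagInEigenbasis B k = hB.eigenvalues k := by
  have h := hB.conjStarAlgAut_star_eigenvectorUnitary
  simp only [Unitary.conjStarAlgAut_apply, Unitary.coe_star, star_star] at h
  simp [diagInEigenbasis, h]

lemma diagInEigenbasis_nonneg {A : Matrix n n ℂ} (hA : A.PosSemidef) (k : n) :
    0 ≤ hB.diagInEigenbasis A k := by
  have := (hA.conjTranspose_mul_mul_same (hB.eigenvectorUnitary : Matrix n n ℂ)).diag_nonneg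
    (i := k)
  exact (Complex.nonneg_iff.mp this).1

lemma diagInEigenbasis_le {A : Matrix n n ℂ} (hAB : A ≤ B) (k : n) :
    hB.diagInEigenbasis A k ≤ hB.eigenvalues k := by
  have hsub := hB.diagInEigenbasis_nonneg (le_iff.mp hAB) k
  rw [← hB.diagInEigenbasis_self k]
  simp only [diagInEigenbasis, Matrix.mul_sub, Matrix.sub_mul, sub_apply, Complex.sub_re] at hsub ⊢
  linarith

end IsHermitian

theorem re_trace_mul_log_le_of_le {A B : Matrix n n ℂ} (hA : 0 ≤ A) (hAB : A ≤ B) :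
    (A * CFC.log A).trace.re ≤ (A * CFC.log B).trace.re := by
  have hA' := nonneg_iff_posSemidef.mp hA
  have hB := (nonneg_iff_posSemidef.mp (hA.trans hAB)).isHermitian
  have htrace_self (f : ℝ → ℝ) :
      (A * cfc f A).trace.re = ∑ k, hA'.1.eigenvalues k * f (hA'.1.eigenvalues k) := by
    simp only [hA'.1.re_trace_mul_cfc, hA'.1.diagInEigenbasis_self]
  rw [CFC.log, CFC.log, htrace_self, hB.re_trace_mul_cfc]
  refine sum_mul_log_le_of_forall_add hA'.eigenvalues_nonneg (hB.diagInEigenbasis_nonneg hA')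
    (hB.diagInEigenbasis_le hAB) fun δ hδ => ?_
  rw [← htrace_self fun x => Real.log (x + δ), ← hB.re_trace_mul_cfc A fun x => Real.log (x + δ),
    ← sub_nonneg, ← Complex.sub_re, ← trace_sub, ← Matrix.mul_sub]
  exact (Complex.nonneg_iff.mp (hA'.trace_mul_nonneg
    (le_iff.mp (cfc_log_add_const_le_of_le hA hAB hδ)))).1

lemma IsHermitian.smul_mul_log_smul {ρ : Matrix n n ℂ} (hρ : ρ.IsHermitian) (c : ℝ) :
    ((c : ℂ) • ρ) * CFC.log ((c : ℂ) • ρ) = (c * Real.log c) • ρ + c • (ρ * CFC.log ρ) := by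
  have hcont (f : ℝ → ℝ) : ContinuousOn f (spectrum ℝ ρ) := finite_real_spectrum.continuousOn f
  have hmul_log (x : ℝ) :
      c * x * Real.log (c * x) = c * Real.log c * x + c * (x * Real.log x) := by
    rcases eq_or_ne c 0 with rfl | hc
    · simp
    rcases eq_or_ne x 0 with rfl | hx
    · simp
    rw [Real.log_mul hc hx]; ring
  have hsa : IsSelfAdjoint ρ := hρ
  rw [Complex.coe_smul, ← cfc_const_mul_id c ρ, CFC.log,
    ← cfc_comp' Real.log (fun x => c * x) ρ
      ((finite_real_spectrum.image _).continuousOn _) (hcont _),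
    ← cfc_mul _ _ ρ (hcont _) (hcont _)]
  simp only [hmul_log]
  rw [cfc_add _ _ _ (hcont _) (hcont _), cfc_const_mul _ _ _ (hcont _),
    cfc_const_mul _ _ _ (hcont _), cfc_mul _ _ _ (hcont _) (hcont _), cfc_id' ℝ ρ]
  rfl

end Matrix

lemma matFun_eq_cfc (A : Matrix n n ℂ) (f : ℝ → ℝ) : matFun A f = cfc f A := by
  unfold matFun
  split_ifs with hA
  · exact (hA.cfc_eq f).symm
  · exact (cfc_apply_of_not_predicate A hA).symm

lemma vN_eq (ρ : Matrix n n ℂ) : vN ρ = -(ρ * CFC.log ρ).trace.re := by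
  rw [vN, matFun_eq_cfc, Complex.neg_re]
  rfl

lemma vN_sum_le {ι : Type*} (s : Finset ι) {A : ι → Matrix n n ℂ} (hA : ∀ i ∈ s, 0 ≤ A i) :
    vN (∑ i ∈ s, A i) ≤ ∑ i ∈ s, vN (A i) := by
  simp only [vN_eq, Finset.sum_mul, Matrix.trace_sum, Complex.re_sum, ← Finset.sum_neg_distrib]
  exact Finset.sum_le_sum fun i hi => neg_le_neg <|
    Matrix.re_trace_mul_log_le_of_le (hA i hi) (Finset.single_le_sum hA hi)

lemma vN_smul {ρ : Matrix n n ℂ} (hρ : ρ.IsHermitian) (c : ℝ) :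
    vN ((c : ℂ) • ρ) = c * vN ρ - c * Real.log c * ρ.trace.re := by
  rw [vN_eq, vN_eq, hρ.smul_mul_log_smul, Matrix.trace_add, Matrix.trace_smul, Matrix.trace_smul,
    Complex.add_re, Complex.real_smul, Complex.real_smul, Complex.re_ofReal_mul,
    Complex.re_ofReal_mul]
  ring

theorem entropy_mixture_le_avg_add_shannon_general
    {d N : ℕ} (ρ : Fin N → Matrix (Fin d) (Fin d) ℂ) (p : Fin N → ℝ)
    (hρ : ∀ i, IsDensity (ρ i)) (hp : ∀ i, 0 ≤ p i) :
    vN (∑ i, (p i : ℂ) • ρ i) ≤ ∑ i, p i * vN (ρ i) + (-∑ i, p i * Real.log (p i)) := by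
  calc vN (∑ i, (p i : ℂ) • ρ i)
      ≤ ∑ i, vN ((p i : ℂ) • ρ i) :=
        vN_sum_le _ fun i _ => ((hρ i).1.smul (Complex.zero_le_real.mpr (hp i))).nonneg
    _ = ∑ i, (p i * vN (ρ i) - p i * Real.log (p i)) := by
        refine Finset.sum_congr rfl fun i _ => ?_
        rw [vN_smul (hρ i).1.isHermitian, (hρ i).2, Complex.one_re, mul_one]
    _ = _ := by rw [Finset.sum_sub_distrib]; ring

theorem entropy_mixture_le_avg_add_shannon
    {d N : ℕ} (ρ : Fin N → Matrix (Fin d) (Fin d) ℂ) (p : Fin N → ℝ)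
    (hρ : ∀ i, IsDensity (ρ i)) (hp : ∀ i, 0 ≤ p i) (hp1 : ∑ i, p i = 1) :
    vN (∑ i, (p i : ℂ) • ρ i) ≤ ∑ i, p i * vN (ρ i) + (-∑ i, p i * Real.log (p i)) :=
  entropy_mixture_le_avg_add_shannon_general ρ p hρ hp
end
end

section
/- For positive semidefinite matrices X, Y on a finite-dimensional Hilbert space and s ∈ (0,1), one has tr[X^s Y^{1-s}] ≥ tr[X(1 - {X-Y}₊)] + tr[Y {X-Y}₊], where {X-Y}₊ denotes the orthogonal projector onto the eigenspace of X-Y corresponding to strictly positive eigenvalues. -/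
noncomputable section
open scoped BigOperators ComplexOrder

variable {n : Type*} [Fintype n] [DecidableEq n]

/-- Fractional matrix power `X^s` via functional calculus (on the support; `0^s = 0`). -/
noncomputable def mpow (A : Matrix n n ℂ) (s : ℝ) : Matrix n n ℂ :=
  matFun A (fun x => x ^ s)

/-- Projector onto the eigenspace of strictly positive eigenvalues of `A`. -/
noncomputable def posProj (A : Matrix n n ℂ) : Matrix n n ℂ :=
  matFun A (fun x => if 0 < x then 1 else 0)

/-!
Put `Δ = X - Y` and `M = Y + Δ₊ = X + Δ₋`, so that `X ≤ M` and `Y ≤ M`, and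
`tr[X (1 - {Δ}₊)] + tr[Y {Δ}₊] = tr X - tr Δ₊ = tr X + tr Y - tr M`.
By the Löwner–Heinz theorem `t ↦ t^s` and `t ↦ t^{1-s}` are operator monotone, so the three
traces
`tr[(M^s - X^s)(M^{1-s} - Y^{1-s})]`, `tr[X^s (M^{1-s} - X^{1-s})]`, `tr[(M^s - Y^s) Y^{1-s}]`
are traces of products of positive matrices, hence nonnegative. Using `A^s A^{1-s} = A`, their
sum is `tr[X^s Y^{1-s}] - tr X - tr Y + tr M`.
-/

open Set

lemma CFC.rpow_mul_rpow_one_sub {A : Type*} [CStarAlgebra A] [PartialOrder A] [StarOrderedRing A]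
    {a : A} (ha : 0 ≤ a) {s : ℝ} (hs : s ∈ Icc 0 1) : a ^ s * a ^ (1 - s) = a := by
  rw [CFC.rpow_eq_cfc_real ha, CFC.rpow_eq_cfc_real ha, ← cfc_mul _ _ a
    (Real.continuous_rpow_const hs.1).continuousOn
    (Real.continuous_rpow_const (sub_nonneg.2 hs.2)).continuousOn]
  conv_rhs => rw [← cfc_id' ℝ a]
  refine cfc_congr fun x hx => ?_
  rw [← Real.rpow_add' (spectrum_nonneg_of_nonneg ha hx) (by norm_num), add_sub_cancel,
    Real.rpow_one]

section MatrixOrder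

open Matrix
open scoped MatrixOrder Matrix.Norms.L2Operator

theorem Matrix.trace_mul_nonneg {A B : Matrix n n ℂ} (hA : 0 ≤ A) (hB : 0 ≤ B) :
    0 ≤ (A * B).trace := by
  obtain ⟨C, rfl⟩ := CStarAlgebra.nonneg_iff_eq_star_mul_self.mp hA
  rw [mul_assoc, trace_mul_comm]
  exact (nonneg_iff_posSemidef.mp (star_right_conjugate_nonneg hB C)).trace_nonneg

theorem Matrix.trace_add_trace_sub_trace_le_trace_rpow_mul_rpow {X Y M : Matrix n n ℂ}
    (hX : 0 ≤ X) (hY : 0 ≤ Y) (hXM : X ≤ M) (hYM : Y ≤ M) {s : ℝ} (hs : s ∈ Icc 0 1) :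
    X.trace + Y.trace - M.trace ≤ (X ^ s * Y ^ (1 - s)).trace := by
  have hs' : 1 - s ∈ Icc (0 : ℝ) 1 := ⟨by linarith [hs.2], by linarith [hs.1]⟩
  have hM : 0 ≤ M := hX.trans hXM
  have h₁ := trace_mul_nonneg (sub_nonneg.2 (CFC.rpow_le_rpow hs hXM))
    (sub_nonneg.2 (CFC.rpow_le_rpow hs' hYM))
  have h₂ := trace_mul_nonneg (CFC.rpow_nonneg (a := X) (y := s))
    (sub_nonneg.2 (CFC.rpow_le_rpow hs' hXM))
  have h₃ := trace_mul_nonneg (sub_nonneg.2 (CFC.rpow_le_rpow hs hYM))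
    (CFC.rpow_nonneg (a := Y) (y := 1 - s))
  have hsum : (M ^ s - X ^ s) * (M ^ (1 - s) - Y ^ (1 - s)) + X ^ s * (M ^ (1 - s) - X ^ (1 - s))
      + (M ^ s - Y ^ s) * Y ^ (1 - s) = X ^ s * Y ^ (1 - s) - (X + Y - M) := by
    simp only [mul_sub, sub_mul, CFC.rpow_mul_rpow_one_sub hX hs, CFC.rpow_mul_rpow_one_sub hY hs,
      CFC.rpow_mul_rpow_one_sub hM hs]
    abel
  have h := add_nonneg (add_nonneg h₁ h₂) h₃
  rwa [← trace_add, ← trace_add, hsum, trace_sub, trace_sub, trace_add, sub_nonneg] at h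

lemma mpow_eq_rpow {A : Matrix n n ℂ} (hA : 0 ≤ A) (s : ℝ) : mpow A s = A ^ s := by
  rw [mpow, matFun, dif_pos (nonneg_iff_posSemidef.mp hA).isHermitian, ← IsHermitian.cfc_eq,
    CFC.rpow_eq_cfc_real hA]

lemma mul_posProj {A : Matrix n n ℂ} (hA : A.IsHermitian) : A * posProj A = A⁺ := by
  rw [posProj, matFun, dif_pos hA, ← IsHermitian.cfc_eq, CFC.posPart_def, cfcₙ_eq_cfc]
  conv_lhs => arg 1; rw [← cfc_id' ℝ A]
  rw [← cfc_mul _ _ A (hg := A.finite_real_spectrum.continuousOn _)]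
  refine cfc_congr fun x _ => ?_
  split_ifs with hx
  · simp [posPart_of_nonneg hx.le]
  · simp [posPart_eq_zero.mpr (not_lt.mp hx)]

theorem Matrix.PosSemidef.trace_mul_one_sub_posProj_add_le_trace_mpow_mul_mpow
    {X Y : Matrix n n ℂ} (hX : X.PosSemidef) (hY : Y.PosSemidef) {s : ℝ} (hs : s ∈ Icc 0 1) :
    (X * (1 - posProj (X - Y))).trace + (Y * posProj (X - Y)).trace
      ≤ (mpow X s * mpow Y (1 - s)).trace := by
  rw [← nonneg_iff_posSemidef] at hX hY
  have hXM : X ≤ Y + (X - Y)⁺ := calc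
    X = Y + (X - Y) := by abel
    _ ≤ Y + (X - Y)⁺ := add_le_add_right CFC.le_posPart Y
  have hYM : Y ≤ Y + (X - Y)⁺ := le_add_of_nonneg_right (CFC.posPart_nonneg _)
  have hP := congrArg trace (mul_posProj (hX.isSelfAdjoint.sub hY.isSelfAdjoint))
  rw [sub_mul, trace_sub] at hP
  rw [mpow_eq_rpow hX, mpow_eq_rpow hY, mul_sub, mul_one, trace_sub]
  convert trace_add_trace_sub_trace_le_trace_rpow_mul_rpow hX hY hXM hYM hs using 1
  rw [trace_add]
  linear_combination -hP

end MatrixOrder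

/-- Audenaert's inequality:
`tr[X^s Y^{1-s}] ≥ tr[X (1 - {X-Y}₊)] + tr[Y {X-Y}₊]` for `s ∈ (0,1)`. -/
theorem audenaert {d : ℕ} (X Y : Matrix (Fin d) (Fin d) ℂ)
    (hX : X.PosSemidef) (hY : Y.PosSemidef) (s : ℝ) (hs : s ∈ Set.Ioo (0 : ℝ) 1) :
    ((mpow X s * mpow Y (1 - s)).trace).re ≥
      ((X * (1 - posProj (X - Y))).trace).re + ((Y * posProj (X - Y)).trace).re := by
  rw [ge_iff_le, ← Complex.add_re]
  exact (Complex.le_def.mp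
    (hX.trace_mul_one_sub_posProj_add_le_trace_mpow_mul_mpow hY (Ioo_subset_Icc_self hs))).1
end
end

section
/- For every permutation-invariant density matrix σ_{A^n} on H_A^{⊗n}, one has σ_{A^n} ≤ C(n,|A|) · ω_{A^n} in the Loewner order, where C(n,|A|) = binom(n+|A|²-1, n) and ω_{A^n} := C(n,|A|)^{-1} · tr_{Ã^n}[P^Sym_{A^nÃ^n}] is the normalized partial trace of the projector onto the symmetric subspace of (H_A⊗H_Ã)^{⊗n} with |Ã| = |A|. -/
noncomputable section
open scoped BigOperators ComplexOrder

variable {n : Type*} [Fintype n] [DecidableEq n]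

/-- A matrix on `H^{⊗k}` is permutation invariant if conjugation by every permutation
of the tensor factors leaves it fixed, i.e. entrywise invariance under permutations. -/
def PermInvariant {γ : Type*} {k : ℕ} (σ : Matrix (Fin k → γ) (Fin k → γ) ℂ) : Prop :=
  ∀ π : Equiv.Perm (Fin k), ∀ x y, σ (x ∘ π) (y ∘ π) = σ x y

/-- The permutation unitary on `H^{⊗k}` associated to `π`. -/
noncomputable def permMatrix (γ : Type*) [DecidableEq γ] {k : ℕ} (π : Equiv.Perm (Fin k)) :
    Matrix (Fin k → γ) (Fin k → γ) ℂ :=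
  Matrix.of fun x y => if x = y ∘ π then 1 else 0

/-- The orthogonal projector onto the symmetric subspace of `(H_A ⊗ H_Ã)^{⊗k}`,
as the average of all permutation unitaries. -/
noncomputable def symProj (a k : ℕ) :
    Matrix (Fin k → Fin a × Fin a) (Fin k → Fin a × Fin a) ℂ :=
  ((k.factorial : ℂ))⁻¹ • ∑ π : Equiv.Perm (Fin k), permMatrix (Fin a × Fin a) π

/-- Partial trace over the second (`Ã`) factor of each of the `k` tensor slots. -/
noncomputable def ptrTilde {a k : ℕ}
    (M : Matrix (Fin k → Fin a × Fin a) (Fin k → Fin a × Fin a) ℂ) :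
    Matrix (Fin k → Fin a) (Fin k → Fin a) ℂ :=
  Matrix.of fun x y => ∑ z : Fin k → Fin a, M (fun i => (x i, z i)) (fun i => (y i, z i))

/-- The universal permutation-invariant state
`ω = binom(k+a²-1, k)⁻¹ · tr_Ã[P^Sym]`. -/
noncomputable def omegaSym (a k : ℕ) : Matrix (Fin k → Fin a) (Fin k → Fin a) ℂ :=
  ((Nat.choose (k + a ^ 2 - 1) k : ℂ))⁻¹ • ptrTilde (symProj a k)

/-! Write `σ = s sᴴ` with `s = √σ`, which inherits the permutation invariance of `σ`. The
vectorization `ψ (x, z) = s x z` is then a symmetric unit vector of `(H_A ⊗ H_Ã)^{⊗k}` whose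
partial trace over `Ã` is `σ`. Hence `|ψ⟩⟨ψ| ≤ P^Sym`, and applying the (positive) partial trace
gives `σ ≤ tr_Ã P^Sym = C · ω`. -/

open Equiv
open scoped Matrix MatrixOrder

section Projection

variable {m R : Type*} [Fintype m] [Semiring R] [StarRing R]

theorem isStarProjection_vecMulVec_star {ψ : m → R} (hψ : star ψ ⬝ᵥ ψ = 1) :
    IsStarProjection (Matrix.vecMulVec ψ (star ψ)) where
  isIdempotentElem := by
    rw [IsIdempotentElem, Matrix.vecMulVec_mul_vecMulVec, hψ, one_smul]
  isSelfAdjoint := by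
    rw [IsSelfAdjoint, Matrix.star_eq_conjTranspose, Matrix.conjTranspose_vecMulVec, star_star]

end Projection

section Average

variable {𝕜 R G : Type*} [Field 𝕜] [CharZero 𝕜] [Ring R] [Algebra 𝕜 R] [Group G] [Fintype G]

theorem average_mul_of_forall_mul_eq {ρ : G →* R} {x : R} (hx : ∀ g, ρ g * x = x) :
    ((Fintype.card G : 𝕜)⁻¹ • ∑ g, ρ g) * x = x := by
  simp only [smul_mul_assoc, Finset.sum_mul, hx, Finset.sum_const, Finset.card_univ,
    ← Nat.cast_smul_eq_nsmul 𝕜, smul_smul]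
  rw [inv_mul_cancel₀ (by exact_mod_cast Fintype.card_ne_zero), one_smul]

variable [StarRing 𝕜] [StarRing R] [StarModule 𝕜 R] in
theorem isStarProjection_average (ρ : G →* R) (hρ : ∀ g, star (ρ g) = ρ g⁻¹) :
    IsStarProjection ((Fintype.card G : 𝕜)⁻¹ • ∑ g, ρ g) where
  isIdempotentElem := average_mul_of_forall_mul_eq fun g => by
    rw [mul_smul_comm, Finset.mul_sum]
    simp_rw [← map_mul]
    rw [Fintype.sum_bijective _ (Group.mulLeft_bijective g) _ _ fun _ => rfl]
  isSelfAdjoint := by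
    rw [IsSelfAdjoint, star_smul, star_inv₀, star_natCast, star_sum]
    simp_rw [hρ]
    rw [Fintype.sum_bijective _ inv_involutive.bijective _ _ fun _ => rfl]

end Average

section Sqrt

variable {𝕜 m : Type*} [RCLike 𝕜] [Fintype m] [DecidableEq m]

theorem cfcSqrt_submatrix_equiv {A : Matrix n n 𝕜} (hA : A.PosSemidef) (e : m ≃ n) :
    CFC.sqrt (A.submatrix e e) = (CFC.sqrt A).submatrix e e := by
  have hsqrt : (CFC.sqrt A).PosSemidef := Matrix.nonneg_iff_posSemidef.mp (CFC.sqrt_nonneg A)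
  rw [CFC.sqrt_eq_iff _ _ (hA.submatrix e).nonneg (hsqrt.submatrix e).nonneg,
    Matrix.submatrix_mul_equiv, CFC.sqrt_mul_sqrt_self A hA.nonneg]

end Sqrt

theorem PermInvariant.cfcSqrt {γ : Type*} [Fintype γ] [DecidableEq γ] {k : ℕ}
    {σ : Matrix (Fin k → γ) (Fin k → γ) ℂ} (hσ : σ.PosSemidef) (h : PermInvariant σ) :
    PermInvariant (CFC.sqrt σ) := by
  intro π x y
  let e := (π.arrowCongr (Equiv.refl γ)).symm
  have hσe : σ.submatrix e e = σ := Matrix.ext (h π)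
  have hsqrt : (CFC.sqrt σ).submatrix e e = CFC.sqrt σ := by
    rw [← cfcSqrt_submatrix_equiv hσ e, hσe]
  exact congrFun₂ hsqrt x y

section PermMatrix

variable {γ : Type*} [DecidableEq γ] {k : ℕ}

theorem permMatrix_eq_permMatrix_arrowCongr (π : Perm (Fin k)) :
    permMatrix γ π = Perm.permMatrix ℂ (π.arrowCongr (Equiv.refl γ)) := by
  ext x y
  simp only [permMatrix, Matrix.of_apply, PEquiv.toMatrix_apply, Equiv.toPEquiv_apply,
    Option.mem_def, Option.some.injEq]
  exact if_congr (Equiv.eq_symm_apply (π.arrowCongr (Equiv.refl γ))) rfl rfl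

theorem permMatrix_mul [Fintype γ] (π τ : Perm (Fin k)) :
    permMatrix γ π * permMatrix γ τ = permMatrix γ (τ * π) := by
  simp only [permMatrix_eq_permMatrix_arrowCongr, ← Matrix.permMatrix_mul]
  rfl

theorem conjTranspose_permMatrix (π : Perm (Fin k)) :
    (permMatrix γ π)ᴴ = permMatrix γ π⁻¹ := by
  rw [permMatrix_eq_permMatrix_arrowCongr, Matrix.conjTranspose_permMatrix,
    permMatrix_eq_permMatrix_arrowCongr]
  rfl

theorem permMatrix_mulVec [Fintype γ] (π : Perm (Fin k)) (v : (Fin k → γ) → ℂ) :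
    permMatrix γ π *ᵥ v = fun x => v (x ∘ ⇑π⁻¹) := by
  rw [permMatrix_eq_permMatrix_arrowCongr, Matrix.permMatrix_mulVec]
  rfl

variable (γ k) in
def permRep [Fintype γ] : Perm (Fin k) →* Matrix (Fin k → γ) (Fin k → γ) ℂ where
  toFun π := permMatrix γ π⁻¹
  map_one' := by rw [inv_one, permMatrix_eq_permMatrix_arrowCongr]; exact Matrix.permMatrix_one
  map_mul' π τ := by rw [permMatrix_mul, mul_inv_rev]

end PermMatrix

section SymProj

variable {a k : ℕ}

theorem symProj_eq_average :
    symProj a k = ((Fintype.card (Perm (Fin k)) : ℂ))⁻¹ • ∑ π, permRep (Fin a × Fin a) k π := by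
  rw [symProj, Fintype.card_perm, Fintype.card_fin]
  congr 1
  exact (Fintype.sum_bijective _ inv_involutive.bijective _ _ fun _ => rfl)

theorem isStarProjection_symProj : IsStarProjection (symProj a k) :=
  symProj_eq_average ▸ isStarProjection_average _ fun π => conjTranspose_permMatrix π⁻¹

theorem symProj_mul_vecMulVec {ψ w : (Fin k → Fin a × Fin a) → ℂ}
    (hψ : ∀ (π : Perm (Fin k)) p, ψ (p ∘ π) = ψ p) :
    symProj a k * Matrix.vecMulVec ψ w = Matrix.vecMulVec ψ w := by
  rw [symProj_eq_average]
  refine average_mul_of_forall_mul_eq fun π => ?_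
  have hfix : permMatrix (Fin a × Fin a) π⁻¹ *ᵥ ψ = ψ := by
    rw [permMatrix_mulVec, inv_inv]
    exact funext fun p => hψ π p
  exact (Matrix.mul_vecMulVec _ _ _).trans (congrArg (Matrix.vecMulVec · w) hfix)

end SymProj

section PartialTrace

variable {a k : ℕ}

theorem ptrTilde_eq_sum_submatrix (M : Matrix (Fin k → Fin a × Fin a) (Fin k → Fin a × Fin a) ℂ) :
    ptrTilde M = ∑ z : Fin k → Fin a,
      M.submatrix (fun x i => (x i, z i)) (fun x i => (x i, z i)) := by
  ext x y
  simp [ptrTilde, Matrix.sum_apply]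

theorem posSemidef_ptrTilde {M : Matrix (Fin k → Fin a × Fin a) (Fin k → Fin a × Fin a) ℂ}
    (hM : M.PosSemidef) : (ptrTilde M).PosSemidef := by
  rw [ptrTilde_eq_sum_submatrix]
  exact Matrix.posSemidef_sum _ fun z _ => hM.submatrix _

theorem ptrTilde_sub (M N : Matrix (Fin k → Fin a × Fin a) (Fin k → Fin a × Fin a) ℂ) :
    ptrTilde (M - N) = ptrTilde M - ptrTilde N := by
  ext x y
  simp [ptrTilde, Finset.sum_sub_distrib]

theorem trace_ptrTilde (M : Matrix (Fin k → Fin a × Fin a) (Fin k → Fin a × Fin a) ℂ) :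
    (ptrTilde M).trace = M.trace := by
  simp only [Matrix.trace, Matrix.diag, ptrTilde, Matrix.of_apply]
  rw [← Fintype.sum_prod_type', ← (Equiv.arrowProdEquivProdArrow _ _ _).symm.sum_comp]
  rfl

def vectorize (s : Matrix (Fin k → Fin a) (Fin k → Fin a) ℂ) : (Fin k → Fin a × Fin a) → ℂ :=
  fun p => s (Prod.fst ∘ p) (Prod.snd ∘ p)

theorem PermInvariant.vectorize {s : Matrix (Fin k → Fin a) (Fin k → Fin a) ℂ}
    (hs : PermInvariant s) (π : Perm (Fin k)) (p : Fin k → Fin a × Fin a) :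
    vectorize s (p ∘ π) = vectorize s p :=
  hs π (Prod.fst ∘ p) (Prod.snd ∘ p)

theorem ptrTilde_vecMulVec_vectorize (s : Matrix (Fin k → Fin a) (Fin k → Fin a) ℂ) :
    ptrTilde (Matrix.vecMulVec (vectorize s) (star (vectorize s))) = s * sᴴ := by
  ext x y
  simp only [ptrTilde, Matrix.of_apply, Matrix.vecMulVec_apply, Pi.star_apply, Matrix.mul_apply,
    Matrix.conjTranspose_apply]
  rfl

end PartialTrace

-- `C = 0` exactly when `a = 0 < k`, i.e. when the index type is empty.
theorem choose_smul_omegaSym {a k : ℕ} [Nonempty (Fin k → Fin a)] :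
    ((Nat.choose (k + a ^ 2 - 1) k : ℂ)) • omegaSym a k = ptrTilde (symProj a k) := by
  have hk : k ≤ k + a ^ 2 - 1 := by
    obtain ⟨f⟩ := ‹Nonempty (Fin k → Fin a)›
    rcases k with _ | k
    · exact Nat.zero_le _
    · have := (f 0).pos
      have : 1 ≤ a ^ 2 := Nat.one_le_pow _ _ this
      omega
  rw [omegaSym, smul_smul, mul_inv_cancel₀ (Nat.cast_ne_zero.mpr (Nat.choose_pos hk).ne'),
    one_smul]

/-- Every permutation-invariant density matrix satisfies
`σ ≤ binom(k+a²-1, k) · ω` in the Loewner order. -/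
theorem permInvariant_le_omegaSym {a k : ℕ}
    (σ : Matrix (Fin k → Fin a) (Fin k → Fin a) ℂ)
    (hσ : IsDensity σ) (hperm : PermInvariant σ) :
    (((Nat.choose (k + a ^ 2 - 1) k : ℂ)) • omegaSym a k - σ).PosSemidef := by
  obtain ⟨hpsd, htr⟩ := hσ
  have : Nonempty (Fin k → Fin a) := by
    by_contra h
    rw [not_nonempty_iff] at h
    simp [Matrix.trace_eq_zero_of_isEmpty] at htr
  set s := CFC.sqrt σ
  set ψ := vectorize s
  have hss : s * sᴴ = σ := by
    rw [(Matrix.nonneg_iff_posSemidef.mp (CFC.sqrt_nonneg σ)).1.eq,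
      CFC.sqrt_mul_sqrt_self σ hpsd.nonneg]
  have hptr : ptrTilde (Matrix.vecMulVec ψ (star ψ)) = σ := by
    rw [ptrTilde_vecMulVec_vectorize, hss]
  have hnorm : star ψ ⬝ᵥ ψ = 1 := by
    rw [dotProduct_comm, ← Matrix.trace_vecMulVec, ← trace_ptrTilde, hptr, htr]
  have hproj := (isStarProjection_vecMulVec_star hnorm).sub_of_mul_eq_right
    isStarProjection_symProj (symProj_mul_vecMulVec (hperm.cfcSqrt hpsd).vectorize)
  have hpos := posSemidef_ptrTilde (Matrix.nonneg_iff_posSemidef.mp hproj.nonneg)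
  rwa [ptrTilde_sub, hptr, ← choose_smul_omegaSym] at hpos
end
end

section
/- For s ∈ (0,1), the Petz Rényi relative entropy of coherence is additive: D_{s,C}(ρ^{⊗n}) = n · D_{s,C}(ρ), where D_{s,C}(ρ) := inf_{σ∈C} D_s(ρ‖σ) and C is the set of density matrices diagonal in a fixed basis (with the incoherent set on the n-fold space being states diagonal in the corresponding product basis). -/
/-!
For an incoherent state `σ = diag q`, `tr[ρ^s σ^{1-s}] = ∑ᵢ aᵢ qᵢ^{1-s}` with `aᵢ = (ρ^s)ᵢᵢ`.
Hölder's inequality with the exponents `1/s` and `1/(1-s)` bounds this by `‖a‖_{1/s}` over the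
probability simplex, with equality at `q ∝ a^{1/s}`; hence
`D_{s,C}(ρ) = s/(s-1) · log ∑ᵢ aᵢ^{1/s}`. Since `(ρ^{⊗k})^s = (ρ^s)^{⊗k}`, the vector `a` for
`ρ^{⊗k}` is `a^{⊗k}`, and `∑ₓ (a^{⊗k})ₓ^{1/s} = (∑ᵢ aᵢ^{1/s})^k`.
-/

noncomputable section
open scoped BigOperators ComplexOrder

variable {n : Type*} [Fintype n] [DecidableEq n]

/-- Petz divergence `D_s(ρ‖σ) = (1/(s-1)) log tr[ρ^s σ^{1-s}]`. -/
noncomputable def petzD (s : ℝ) (ρ σ : Matrix n n ℂ) : ℝ :=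
  (1 / (s - 1)) * Real.log (((mpow ρ s * mpow σ (1 - s)).trace).re)

/-- Incoherent states: diagonal in the fixed (product) basis. -/
def IsIncoherent (σ : Matrix n n ℂ) : Prop := ∀ i j, i ≠ j → σ i j = 0

/-- Petz Rényi relative entropy of coherence `D_{s,C}(ρ) = inf_{σ ∈ C} D_s(ρ‖σ)`. -/
noncomputable def petzCoherence (s : ℝ) (ρ : Matrix n n ℂ) : ℝ :=
  ⨅ σ : {σ : Matrix n n ℂ // IsDensity σ ∧ IsIncoherent σ}, petzD s ρ σ.1

/-- `k`-fold tensor (Kronecker) power of a matrix. -/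
noncomputable def tpow {d : ℕ} (ρ : Matrix (Fin d) (Fin d) ℂ) (k : ℕ) :
    Matrix (Fin k → Fin d) (Fin k → Fin d) ℂ :=
  Matrix.of fun x y => ∏ i, ρ (x i) (y i)

section FunctionalCalculus
open Matrix Polynomial
variable {m : Type*} [Fintype m] [DecidableEq m]

lemma aeval_unitary_conj_diagonal (U : unitaryGroup m ℂ) (μ : m → ℝ) (p : ℝ[X]) :
    aeval ((U : Matrix m m ℂ) * diagonal (fun i => (μ i : ℂ)) * star (U : Matrix m m ℂ)) p
      = U * diagonal (fun i => ((p.eval (μ i) : ℝ) : ℂ)) * star (U : Matrix m m ℂ) := by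
  have hconj := aeval_algHom_apply (Unitary.conjStarAlgAut ℝ (Matrix m m ℂ) U)
    (diagonal (fun i => (μ i : ℂ))) p
  have hdiag := aeval_algHom_apply (diagonalAlgHom ℝ : (m → ℂ) →ₐ[ℝ] Matrix m m ℂ)
    (fun i => (μ i : ℂ)) p
  simp only [Unitary.conjStarAlgAut_apply] at hconj
  rw [hconj]
  refine congrArg (fun D => _ * D * _) (hdiag.trans (congrArg diagonal ?_))
  ext i
  rw [aeval_pi_apply₂, ← Complex.coe_algebraMap, aeval_algebraMap_apply_eq_algebraMap_eval]

lemma isHermitian_unitary_conj_diagonal (U : unitaryGroup m ℂ) (μ : m → ℝ) :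
    ((U : Matrix m m ℂ) * diagonal (fun i => (μ i : ℂ)) * star (U : Matrix m m ℂ)).IsHermitian :=
  isHermitian_mul_mul_conjTranspose _ (isHermitian_diagonal_iff.mpr fun _ => Complex.conj_ofReal _)

lemma matFun_unitary_conj_diagonal (U : unitaryGroup m ℂ) (μ : m → ℝ) (f : ℝ → ℝ) :
    matFun ((U : Matrix m m ℂ) * diagonal (fun i => (μ i : ℂ)) * star (U : Matrix m m ℂ)) f
      = U * diagonal (fun i => ((f (μ i) : ℝ) : ℂ)) * star (U : Matrix m m ℂ) := by
  have hA := isHermitian_unitary_conj_diagonal U μ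
  -- both sides are values of one polynomial interpolating `f` at the `μ i` and on the spectrum
  set S := Finset.univ.image μ ∪ Finset.univ.image hA.eigenvalues
  have hp : ∀ x ∈ S, (Lagrange.interpolate S id f).eval x = f x := fun x hx =>
    Lagrange.eval_interpolate_at_node f (Set.injOn_id _) hx
  have hspec : (spectrum ℝ ((U : Matrix m m ℂ) * diagonal (fun i => (μ i : ℂ)) *
      star (U : Matrix m m ℂ))).EqOn f (Lagrange.interpolate S id f).eval := by
    rw [hA.spectrum_real_eq_range_eigenvalues]
    rintro _ ⟨i, rfl⟩
    exact (hp _ (Finset.mem_union_right _ (Finset.mem_image_of_mem _ (Finset.mem_univ i)))).symm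
  rw [matFun, dif_pos hA, ← hA.cfc_eq, cfc_congr hspec, cfc_polynomial _ _ hA.isSelfAdjoint,
    aeval_unitary_conj_diagonal]
  congr
  ext i
  rw [hp _ (Finset.mem_union_left _ (Finset.mem_image_of_mem _ (Finset.mem_univ i)))]

end FunctionalCalculus

section TensorPower
open Matrix
variable {d : ℕ}

lemma tpow_mul (A B : Matrix (Fin d) (Fin d) ℂ) (k : ℕ) :
    tpow (A * B) k = tpow A k * tpow B k := by
  ext x y
  simp only [tpow, of_apply, mul_apply, Finset.prod_univ_sum, Fintype.piFinset_univ,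
    Finset.prod_mul_distrib]

lemma tpow_conjTranspose (A : Matrix (Fin d) (Fin d) ℂ) (k : ℕ) : tpow Aᴴ k = (tpow A k)ᴴ := by
  ext x y
  simp only [tpow, of_apply, conjTranspose_apply, star_prod]

lemma tpow_diagonal (c : Fin d → ℂ) (k : ℕ) :
    tpow (diagonal c) k = diagonal fun x : Fin k → Fin d => ∏ i, c (x i) := by
  ext x y
  by_cases h : x = y
  · subst h
    simp [tpow]
  · obtain ⟨i, hi⟩ := Function.ne_iff.mp h
    rw [diagonal_apply_ne _ h]
    exact Finset.prod_eq_zero (Finset.mem_univ i) (diagonal_apply_ne _ hi)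

lemma tpow_one (k : ℕ) : tpow (1 : Matrix (Fin d) (Fin d) ℂ) k = 1 := by
  simp [← diagonal_one, tpow_diagonal]

lemma trace_tpow (A : Matrix (Fin d) (Fin d) ℂ) (k : ℕ) : (tpow A k).trace = A.trace ^ k := by
  simp only [trace, diag_apply, tpow, of_apply, Fintype.sum_pow]

lemma tpow_mem_unitaryGroup {U : Matrix (Fin d) (Fin d) ℂ} (hU : U ∈ unitaryGroup (Fin d) ℂ)
    (k : ℕ) : tpow U k ∈ unitaryGroup (Fin k → Fin d) ℂ := by
  rw [mem_unitaryGroup_iff, star_eq_conjTranspose, ← tpow_conjTranspose, ← tpow_mul,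
    ← star_eq_conjTranspose, Unitary.mul_star_self_of_mem hU, tpow_one]

end TensorPower

section Spectral
open Matrix
variable {m : Type*} [Fintype m] [DecidableEq m]

lemma Matrix.PosSemidef.exists_eq_unitary_conj_diagonal {ρ : Matrix m m ℂ} (hρ : ρ.PosSemidef) :
    ∃ (U : unitaryGroup m ℂ) (ν : m → ℝ), (∀ i, 0 ≤ ν i) ∧
      ρ = (U : Matrix m m ℂ) * diagonal (fun i => (ν i : ℂ)) * star (U : Matrix m m ℂ) :=
  ⟨hρ.1.eigenvectorUnitary, hρ.1.eigenvalues, hρ.eigenvalues_nonneg, hρ.1.spectral_theorem⟩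

lemma trace_unitary_conj (U : unitaryGroup m ℂ) (D : Matrix m m ℂ) :
    ((U : Matrix m m ℂ) * D * star (U : Matrix m m ℂ)).trace = D.trace := by
  rw [trace_mul_comm, ← Matrix.mul_assoc, Unitary.star_mul_self_of_mem U.2, Matrix.one_mul]

lemma mpow_unitary_conj_diagonal (U : unitaryGroup m ℂ) (ν : m → ℝ) (s : ℝ) :
    mpow ((U : Matrix m m ℂ) * diagonal (fun i => (ν i : ℂ)) * star (U : Matrix m m ℂ)) s
      = U * diagonal (fun i => ((ν i ^ s : ℝ) : ℂ)) * star (U : Matrix m m ℂ) :=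
  matFun_unitary_conj_diagonal U ν _

lemma mpow_diagonal (q : m → ℝ) (s : ℝ) :
    mpow (diagonal fun i => (q i : ℂ)) s = diagonal fun i => ((q i ^ s : ℝ) : ℂ) := by
  simpa using mpow_unitary_conj_diagonal 1 q s

lemma Matrix.PosSemidef.mpow {ρ : Matrix m m ℂ} (hρ : ρ.PosSemidef) (s : ℝ) :
    (mpow ρ s).PosSemidef := by
  obtain ⟨U, ν, hν, rfl⟩ := hρ.exists_eq_unitary_conj_diagonal
  rw [mpow_unitary_conj_diagonal]
  exact (posSemidef_diagonal_iff.mpr fun i =>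
    Complex.zero_le_real.mpr (Real.rpow_nonneg (hν i) s)).mul_mul_conjTranspose_same _

lemma IsDensity.sum_re_diag_mpow_pos {ρ : Matrix m m ℂ} (hρ : IsDensity ρ) (s : ℝ) :
    0 < ∑ i, (mpow ρ s i i).re := by
  obtain ⟨U, ν, hν, rfl⟩ := hρ.1.exists_eq_unitary_conj_diagonal
  have hsum : ∑ i, ν i = 1 := by
    simpa [trace_unitary_conj, trace_diagonal] using congrArg Complex.re hρ.2
  obtain ⟨j, -, hj⟩ := (Finset.sum_pos_iff_of_nonneg fun i _ => hν i).mp (hsum ▸ one_pos)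
  have htrace :=
    congrArg Complex.re (trace_unitary_conj U (diagonal fun i => ((ν i ^ s : ℝ) : ℂ)))
  rw [trace, trace_diagonal, Complex.re_sum, Complex.re_sum] at htrace
  simp only [diag_apply, Complex.ofReal_re] at htrace
  rw [mpow_unitary_conj_diagonal, htrace]
  exact Finset.sum_pos' (fun i _ => Real.rpow_nonneg (hν i) s)
    ⟨j, Finset.mem_univ j, Real.rpow_pos_of_pos hj s⟩

end Spectral

section TensorPowerSpectral
open Matrix
variable {d : ℕ}

lemma tpow_unitary_conj_diagonal (U : unitaryGroup (Fin d) ℂ) (ν : Fin d → ℝ) (k : ℕ) :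
    tpow ((U : Matrix (Fin d) (Fin d) ℂ) * diagonal (fun i => (ν i : ℂ)) * star (U : Matrix _ _ ℂ)) k
      = tpow U k * diagonal (fun x => ((∏ i, ν (x i) : ℝ) : ℂ)) * star (tpow U k) := by
  simp only [tpow_mul, star_eq_conjTranspose, tpow_conjTranspose, tpow_diagonal,
    Complex.ofReal_prod]

lemma mpow_tpow {ρ : Matrix (Fin d) (Fin d) ℂ} (hρ : ρ.PosSemidef) (s : ℝ) (k : ℕ) :
    mpow (tpow ρ k) s = tpow (mpow ρ s) k := by
  obtain ⟨U, ν, hν, rfl⟩ := hρ.exists_eq_unitary_conj_diagonal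
  rw [mpow_unitary_conj_diagonal, tpow_unitary_conj_diagonal, tpow_unitary_conj_diagonal]
  simp_rw [Real.finsetProd_rpow _ _ (fun i _ => hν _)]
  exact mpow_unitary_conj_diagonal ⟨_, tpow_mem_unitaryGroup U.2 k⟩ _ s

lemma IsDensity.tpow {ρ : Matrix (Fin d) (Fin d) ℂ} (hρ : IsDensity ρ) (k : ℕ) :
    IsDensity (tpow ρ k) := by
  refine ⟨?_, by rw [trace_tpow, hρ.2, one_pow]⟩
  obtain ⟨U, ν, hν, hρU⟩ := hρ.1.exists_eq_unitary_conj_diagonal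
  rw [hρU, tpow_unitary_conj_diagonal]
  exact (posSemidef_diagonal_iff.mpr fun x => Complex.zero_le_real.mpr
    (Finset.prod_nonneg fun i _ => hν (x i))).mul_mul_conjTranspose_same _

lemma Matrix.IsHermitian.re_tpow_apply_self {A : Matrix (Fin d) (Fin d) ℂ} (hA : A.IsHermitian)
    (k : ℕ) (x : Fin k → Fin d) : (tpow A k x x).re = ∏ i, (A (x i) (x i)).re := by
  rw [tpow, of_apply, ← Complex.ofReal_re (∏ i, (A (x i) (x i)).re), Complex.ofReal_prod]
  exact congrArg Complex.re (Finset.prod_congr rfl fun i _ => (hA.coe_re_apply_self (x i)).symm)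

end TensorPowerSpectral

lemma exists_prod_comp_eq_zero_iff {m M : Type*} [CommMonoidWithZero M] [Nontrivial M]
    [NoZeroDivisors M] {a : m → M} {k : ℕ} :
    (∃ x : Fin k → m, ∏ i, a (x i) = 0) ↔ k ≠ 0 ∧ ∃ j, a j = 0 := by
  simp only [Finset.prod_eq_zero_iff, Finset.mem_univ, true_and]
  constructor
  · rintro ⟨x, i, hi⟩
    exact ⟨fun hk => (hk ▸ i).elim0, x i, hi⟩
  · rintro ⟨hk, j, hj⟩
    exact ⟨fun _ => j, ⟨0, Nat.pos_of_ne_zero hk⟩, hj⟩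

section Optimization
variable {m : Type*} [Fintype m] {s : ℝ}

lemma sum_mul_rpow_le_of_mem_stdSimplex {a q : m → ℝ} (ha : ∀ i, 0 ≤ a i)
    (hq : q ∈ stdSimplex ℝ m) (hs : s ∈ Set.Ioo (0 : ℝ) 1) :
    ∑ i, a i * q i ^ (1 - s) ≤ (∑ i, a i ^ (1 / s)) ^ s := by
  obtain ⟨hs0, hs1⟩ := hs
  have hpq : (1 / s).HolderConjugate (1 / (1 - s)) :=
    ⟨by simp, by positivity, one_div_pos.mpr (sub_pos.mpr hs1)⟩
  have hq' : ∑ i, (q i ^ (1 - s)) ^ (1 / (1 - s)) = 1 := by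
    simp_rw [← Real.rpow_mul (hq.1 _), mul_one_div_cancel (sub_pos.mpr hs1).ne', Real.rpow_one]
    exact hq.2
  simpa only [hq', Real.one_rpow, mul_one, one_div_one_div] using
    Real.inner_le_Lp_mul_Lq_of_nonneg Finset.univ hpq (fun i _ => ha i)
    (fun i _ => Real.rpow_nonneg (hq.1 i) (1 - s))

lemma sum_mul_rpow_normalized {a : m → ℝ} (ha : ∀ i, 0 ≤ a i) (hs : 0 < s)
    (hT : 0 < ∑ i, a i ^ (1 / s)) :
    ∑ i, a i * (a i ^ (1 / s) / ∑ j, a j ^ (1 / s)) ^ (1 - s) = (∑ i, a i ^ (1 / s)) ^ s := by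
  set T := ∑ i, a i ^ (1 / s)
  have hterm : ∀ i, a i * (a i ^ (1 / s) / T) ^ (1 - s) = a i ^ (1 / s) / T ^ (1 - s) := by
    intro i
    have hb := Real.rpow_nonneg (ha i) (1 / s)
    have ha_eq : a i = (a i ^ (1 / s)) ^ s := by
      rw [← Real.rpow_mul (ha i), one_div_mul_cancel hs.ne', Real.rpow_one]
    rw [Real.div_rpow hb hT.le, ← mul_div_assoc]
    nth_rw 1 [ha_eq]
    rw [← Real.rpow_add' hb (by norm_num), add_sub_cancel, Real.rpow_one]
  rw [Finset.sum_congr rfl fun i _ => hterm i, ← Finset.sum_div,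
    ← Real.rpow_one_sub' hT.le (by simpa using hs.ne'), sub_sub_cancel]

def petzDiag (s : ℝ) (a q : m → ℝ) : ℝ := 1 / (s - 1) * Real.log (∑ i, a i * q i ^ (1 - s))

-- The `min _ 0` branch comes from the junk value `Real.log 0 = 0`: if `a i = 0`, then
-- `q = Pi.single i 1` makes the sum in `petzDiag` vanish.
def petzCoherenceValue (s : ℝ) (a : m → ℝ) : ℝ :=
  if ∃ i, a i = 0 then min (s / (s - 1) * Real.log (∑ i, a i ^ (1 / s))) 0
  else s / (s - 1) * Real.log (∑ i, a i ^ (1 / s))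

lemma petzCoherenceValue_le_petzDiag {a q : m → ℝ} (ha : ∀ i, 0 ≤ a i)
    (hq : q ∈ stdSimplex ℝ m) (hs : s ∈ Set.Ioo (0 : ℝ) 1) :
    petzCoherenceValue s a ≤ petzDiag s a q := by
  rw [petzCoherenceValue, petzDiag]
  set G := ∑ i, a i * q i ^ (1 - s)
  set T := ∑ i, a i ^ (1 / s)
  have hG : 0 ≤ G := Finset.sum_nonneg fun i _ => mul_nonneg (ha i) (Real.rpow_nonneg (hq.1 i) _)
  rcases hG.eq_or_lt with hG0 | hGpos
  · have hzero : ∃ i, a i = 0 := by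
      by_contra! hne
      obtain ⟨j, -, hj⟩ := (Finset.sum_pos_iff_of_nonneg fun i _ => hq.1 i).mp (hq.2 ▸ one_pos)
      exact hG0.not_lt (Finset.sum_pos'
        (fun i _ => mul_nonneg (ha i) (Real.rpow_nonneg (hq.1 i) _))
        ⟨j, Finset.mem_univ j, mul_pos ((ha j).lt_of_ne (hne j).symm) (Real.rpow_pos_of_pos hj _)⟩)
    rw [if_pos hzero, ← hG0, Real.log_zero, mul_zero]
    exact min_le_right _ _
  · have hGT : G ≤ T ^ s := sum_mul_rpow_le_of_mem_stdSimplex ha hq hs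
    have hT : 0 < T := by
      refine (show 0 ≤ T from Finset.sum_nonneg fun i _ => Real.rpow_nonneg (ha i) _).lt_of_ne
        fun hT0 => hGpos.not_ge ?_
      rwa [← hT0, Real.zero_rpow hs.1.ne'] at hGT
    have hF : s / (s - 1) * Real.log T ≤ 1 / (s - 1) * Real.log G := by
      calc s / (s - 1) * Real.log T = 1 / (s - 1) * Real.log (T ^ s) := by
            rw [Real.log_rpow hT]; ring
        _ ≤ 1 / (s - 1) * Real.log G := mul_le_mul_of_nonpos_left (Real.log_le_log hGpos hGT)
            (one_div_nonpos.mpr (sub_nonpos.mpr hs.2.le))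
    split_ifs
    exacts [(min_le_left _ _).trans hF, hF]

lemma isLeast_petzCoherenceValue [DecidableEq m] {a : m → ℝ} (ha : ∀ i, 0 ≤ a i)
    (ha_pos : 0 < ∑ i, a i) (hs : s ∈ Set.Ioo (0 : ℝ) 1) :
    IsLeast (petzDiag s a '' stdSimplex ℝ m) (petzCoherenceValue s a) := by
  refine ⟨?_, Set.forall_mem_image.2 fun q hq => petzCoherenceValue_le_petzDiag ha hq hs⟩
  set T := ∑ i, a i ^ (1 / s)
  have hT : 0 < T := by
    obtain ⟨j, -, hj⟩ := (Finset.sum_pos_iff_of_nonneg fun i _ => ha i).mp ha_pos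
    exact Finset.sum_pos' (fun i _ => Real.rpow_nonneg (ha i) _)
      ⟨j, Finset.mem_univ j, Real.rpow_pos_of_pos hj _⟩
  have hopt : s / (s - 1) * Real.log T ∈ petzDiag s a '' stdSimplex ℝ m := by
    refine ⟨fun i => a i ^ (1 / s) / T, ⟨fun i => div_nonneg (Real.rpow_nonneg (ha i) _) hT.le,
      by rw [← Finset.sum_div, div_self hT.ne']⟩, ?_⟩
    rw [petzDiag, sum_mul_rpow_normalized ha hs.1 hT, Real.log_rpow hT]
    ring
  rw [petzCoherenceValue]
  split_ifs with hzero
  · obtain ⟨i, hi⟩ := hzero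
    rcases min_choice (s / (s - 1) * Real.log T) 0 with h | h <;> rw [h]
    · exact hopt
    · refine ⟨Pi.single i 1, single_mem_stdSimplex ℝ i, ?_⟩
      rw [petzDiag, Finset.sum_eq_zero, Real.log_zero, mul_zero]
      intro j _
      rcases eq_or_ne j i with rfl | hji
      · rw [hi, zero_mul]
      · rw [Pi.single_eq_of_ne hji, Real.zero_rpow (sub_pos.mpr hs.2).ne', mul_zero]
  · exact hopt

lemma petzCoherenceValue_prod {a : m → ℝ} (ha : ∀ i, 0 ≤ a i) (k : ℕ) :
    petzCoherenceValue s (fun x : Fin k → m => ∏ i, a (x i)) = k * petzCoherenceValue s a := by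
  have hsum : ∑ x : Fin k → m, (∏ i, a (x i)) ^ (1 / s) = (∑ i, a i ^ (1 / s)) ^ k := by
    simp_rw [Fintype.sum_pow, Real.finsetProd_rpow _ _ (fun i _ => ha _)]
  simp only [petzCoherenceValue, hsum, exists_prod_comp_eq_zero_iff, Real.log_pow]
  by_cases hzero : ∃ i, a i = 0
  · rcases eq_or_ne k 0 with rfl | hk
    · simp
    · rw [if_pos ⟨hk, hzero⟩, if_pos hzero, mul_min_of_nonneg _ _ k.cast_nonneg, mul_zero,
        mul_left_comm]
  · rw [if_neg fun h => hzero h.2, if_neg hzero, mul_left_comm]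

end Optimization

lemma Matrix.PosSemidef.re_apply_self_nonneg {m : Type*} {A : Matrix m m ℂ} (hA : A.PosSemidef)
    (i : m) : 0 ≤ (A i i).re :=
  (Complex.nonneg_iff.mp hA.diag_nonneg).1

section Coherence
open Matrix
variable {m : Type*} [Fintype m] [DecidableEq m] {s : ℝ}

lemma petzD_diagonal (ρ : Matrix m m ℂ) (q : m → ℝ) :
    petzD s ρ (diagonal fun i => (q i : ℂ)) = petzDiag s (fun i => (mpow ρ s i i).re) q := by
  simp [petzD, petzDiag, mpow_diagonal, trace, mul_diagonal]

lemma isDensity_and_isIncoherent_iff {σ : Matrix m m ℂ} :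
    IsDensity σ ∧ IsIncoherent σ ↔ ∃ q ∈ stdSimplex ℝ m, σ = diagonal fun i => (q i : ℂ) := by
  constructor
  · rintro ⟨⟨hpsd, htr⟩, hinc⟩
    refine ⟨fun i => (σ i i).re, ⟨hpsd.re_apply_self_nonneg, ?_⟩, ?_⟩
    · simpa [trace] using congrArg Complex.re htr
    · ext i j
      rcases eq_or_ne i j with rfl | hij
      · rw [diagonal_apply_eq]
        exact (hpsd.1.coe_re_apply_self i).symm
      · rw [hinc i j hij, diagonal_apply_ne _ hij]
  · rintro ⟨q, ⟨hq0, hq1⟩, rfl⟩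
    refine ⟨⟨posSemidef_diagonal_iff.mpr fun i => Complex.zero_le_real.mpr (hq0 i), ?_⟩,
      fun i j hij => diagonal_apply_ne _ hij⟩
    rw [trace_diagonal, ← Complex.ofReal_sum, hq1, Complex.ofReal_one]

lemma range_petzD_incoherent (ρ : Matrix m m ℂ) :
    Set.range (fun σ : {σ : Matrix m m ℂ // IsDensity σ ∧ IsIncoherent σ} => petzD s ρ σ.1)
      = petzDiag s (fun i => (mpow ρ s i i).re) '' stdSimplex ℝ m := by
  ext v
  constructor
  · rintro ⟨⟨σ, hσ⟩, rfl⟩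
    obtain ⟨q, hq, rfl⟩ := isDensity_and_isIncoherent_iff.mp hσ
    exact ⟨q, hq, (petzD_diagonal ρ q).symm⟩
  · rintro ⟨q, hq, rfl⟩
    exact ⟨⟨_, isDensity_and_isIncoherent_iff.mpr ⟨q, hq, rfl⟩⟩, petzD_diagonal ρ q⟩

lemma petzCoherence_eq_petzCoherenceValue {ρ : Matrix m m ℂ} (hρ : IsDensity ρ)
    (hs : s ∈ Set.Ioo (0 : ℝ) 1) :
    petzCoherence s ρ = petzCoherenceValue s (fun i => (mpow ρ s i i).re) := by
  rw [petzCoherence, iInf, range_petzD_incoherent]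
  exact (isLeast_petzCoherenceValue (hρ.1.mpow s).re_apply_self_nonneg
    (hρ.sum_re_diag_mpow_pos s) hs).csInf_eq

end Coherence

/-- Additivity of the Petz Rényi relative entropy of coherence:
`D_{s,C}(ρ^{⊗n}) = n · D_{s,C}(ρ)` for `s ∈ (0,1)`. -/
theorem petzCoherence_additive {d : ℕ} (k : ℕ) (ρ : Matrix (Fin d) (Fin d) ℂ)
    (hρ : IsDensity ρ) (s : ℝ) (hs : s ∈ Set.Ioo (0 : ℝ) 1) :
    petzCoherence s (tpow ρ k) = (k : ℝ) * petzCoherence s ρ := by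
  have hρs := hρ.1.mpow s
  rw [petzCoherence_eq_petzCoherenceValue (hρ.tpow k) hs,
    petzCoherence_eq_petzCoherenceValue hρ hs, mpow_tpow hρ.1]
  simp_rw [hρs.1.re_tpow_apply_self]
  exact petzCoherenceValue_prod hρs.re_apply_self_nonneg k
end
end
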